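/- arXiv:2405.02473 — 3 statements merged into one kernel-verified Lean document; each statement's English description precedes it below -/
import Mathlib

section
/- Limit at zero of the graded components of the ABRR recursion (second half of the asymptotic lemma, lim_{z→0} J_m^+(z^θ) = R_m^+): Fix θ = (θ_1,…,θ_r) with each θ_i a positive integer, and for a multi-index n set d_n := ∑_{i=1}^r n_i θ_i (so d_n ≥ 1 for n ≠ 0). Suppose J : ℕ^r → (ℝ → M_N(ℂ)) satisfies, for all sufficiently small real z > 0: J_0(z) = 1 and, for every multi-index n ≠ 0, (c_n z^{d_n} − 1)·J_n(z) = ∑_{0 ≠ m ≤ n} J_{n−m}(z)·R(m). Then for every multi-index n ≠ 0, as z → 0⁺ the matrix J_n(z) converges to ∑_{k=1}^{|n|} (−1)^k ∑ R(m⁽¹⁾)·R(m⁽²⁾)⋯R(m⁽ᵏ⁾), where the inner sum is over all ordered k-tuples (m⁽¹⁾, …, m⁽ᵏ⁾) of nonzero multi-indices with m⁽¹⁾ + ⋯ + m⁽ᵏ⁾ = n, and |n| := ∑_i n_i. (Degree by degree this says that 1 + ∑_{n≠0} lim_{z→0⁺} J_n(z) is the inverse of 1 + ∑_{n≠0} R(n).)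 -/
namespace ABRRAux

variable {r N : ℕ} (R : (Fin r → ℕ) → Matrix (Fin N) (Fin N) ℂ)

def tuples (k : ℕ) (n : Fin r → ℕ) : Finset (Fin k → Fin r → ℕ) :=
  (Fintype.piFinset fun _ : Fin k => Finset.Iic n).filter
    (fun f => (∀ i, f i ≠ 0) ∧ ∑ i, f i = n)

lemma mem_tuples {k : ℕ} {n : Fin r → ℕ} {f : Fin k → Fin r → ℕ} :
    f ∈ tuples k n ↔ (∀ i, f i ≠ 0) ∧ ∑ i, f i = n := by
  constructor
  · intro h
    exact (Finset.mem_filter.mp h).2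
  · intro h
    refine Finset.mem_filter.mpr ⟨Fintype.mem_piFinset.mpr fun i => ?_, h⟩
    rw [Finset.mem_Iic, ← h.2]
    exact Finset.single_le_sum (fun j _ => by positivity) (Finset.mem_univ i)

noncomputable def Ak (k : ℕ) (n : Fin r → ℕ) : Matrix (Fin N) (Fin N) ℂ :=
  ∑ f ∈ tuples k n, (List.ofFn fun i : Fin k => R (f i)).prod

lemma sum_pos_of_ne_zero {n : Fin r → ℕ} (hn : n ≠ 0) : 1 ≤ ∑ i, n i := by
  rcases Nat.eq_zero_or_pos (∑ i, n i) with h | h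
  · exact absurd (funext fun i => (Finset.sum_eq_zero_iff.mp h i (Finset.mem_univ i))) hn
  · exact h

lemma tuples_eq_empty {k : ℕ} {n : Fin r → ℕ} (h : ∑ i, n i < k) : tuples k n = ∅ := by
  rw [Finset.eq_empty_iff_forall_notMem]
  intro f hf
  rw [mem_tuples] at hf
  have h1 : ∀ i : Fin k, 1 ≤ ∑ j, f i j := fun i => sum_pos_of_ne_zero (hf.1 i)
  have h2 : (k : ℕ) ≤ ∑ i : Fin k, ∑ j, f i j := by
    calc (k : ℕ) = ∑ _i : Fin k, 1 := by simp
    _ ≤ _ := Finset.sum_le_sum fun i _ => h1 i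
  rw [Finset.sum_comm] at h2
  have h3 : ∑ j, ∑ i : Fin k, f i j = ∑ j, n j := by
    refine Finset.sum_congr rfl fun j _ => ?_
    rw [← hf.2]
    simp [Finset.sum_apply]
  omega

lemma Ak_zero (n : Fin r → ℕ) : Ak R 0 n = if n = 0 then 1 else 0 := by
  by_cases h : n = 0
  · subst h
    rw [if_pos rfl]
    have : tuples (r := r) 0 (0 : Fin r → ℕ) = {fun i => Fin.elim0 i} := by
      ext f
      simp [mem_tuples]
      funext i
      exact i.elim0
    rw [Ak, this]
    simp
  · rw [if_neg h, Ak]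
    have : tuples (r := r) 0 n = ∅ := by
      rw [Finset.eq_empty_iff_forall_notMem]
      intro f hf
      rw [mem_tuples] at hf
      exact h (by rw [← hf.2]; simp)
    rw [this, Finset.sum_empty]

noncomputable def Lf (n : Fin r → ℕ) : Matrix (Fin N) (Fin N) ℂ :=
  if n = 0 then 1 else
    ∑ k ∈ Finset.Icc 1 (∑ i, n i), (-1 : ℂ) ^ k • Ak R k n

lemma Lf_eq (n : Fin r → ℕ) (K : ℕ) (h : ∑ i, n i < K) :
    Lf R n = ∑ k ∈ Finset.range K, (-1 : ℂ) ^ k • Ak R k n := by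
  by_cases h0 : n = 0
  · subst h0
    rw [Lf, if_pos rfl]
    rw [Finset.sum_eq_single 0]
    · simp [Ak_zero]
    · intro k hk hk0
      have : tuples (r := r) k (0 : Fin r → ℕ) = ∅ :=
        tuples_eq_empty (by simpa using Nat.pos_of_ne_zero hk0)
      rw [Ak, this]
      simp
    · intro h'
      exact absurd (Finset.mem_range.mpr (by simpa using h)) h'
  · rw [Lf, if_neg h0]
    refine Finset.sum_subset ?_ ?_
    · intro k hk
      rw [Finset.mem_Icc] at hk
      rw [Finset.mem_range]
      omega
    · intro k hk hk'
      rw [Finset.mem_range] at hk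
      rw [Finset.mem_Icc, not_and_or] at hk'
      rcases hk' with h1 | h2
      · have : k = 0 := by omega
        subst this
        simp [Ak_zero, h0]
      · rw [Ak, tuples_eq_empty (by omega), Finset.sum_empty, smul_zero]

lemma Ak_succ (k : ℕ) (n : Fin r → ℕ) :
    Ak R (k + 1) n = ∑ m ∈ (Finset.Iic n).filter (· ≠ 0), Ak R k (n - m) * R m := by
  have hrw : ∀ m ∈ (Finset.Iic n).filter (· ≠ 0),
      Ak R k (n - m) * R m
        = ∑ g ∈ tuples k (n - m), (List.ofFn fun i : Fin k => R (g i)).prod * R m := by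
    intro m _
    rw [Ak, Finset.sum_mul]
  rw [Finset.sum_congr rfl hrw, Finset.sum_sigma']
  rw [Ak]
  refine Finset.sum_nbij' (i := fun f => ⟨f (Fin.last k), Fin.init f⟩)
    (j := fun p => Fin.snoc p.2 p.1) ?_ ?_ ?_ ?_ ?_
  · intro f hf
    rw [mem_tuples] at hf
    have hsum : ∑ i : Fin k, Fin.init f i + f (Fin.last k) = n := by
      rw [← hf.2, Fin.sum_univ_castSucc]
      rfl
    have hm : f (Fin.last k) ≤ n := le_add_self.trans hsum.le
    refine Finset.mem_sigma.mpr ⟨Finset.mem_filter.mpr ⟨Finset.mem_Iic.mpr hm, hf.1 _⟩, ?_⟩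
    rw [mem_tuples]
    exact ⟨fun i => hf.1 _, eq_tsub_of_add_eq hsum⟩
  · rintro ⟨m, g⟩ hp
    rw [Finset.mem_sigma, Finset.mem_filter, Finset.mem_Iic, mem_tuples] at hp
    obtain ⟨⟨hm, hm0⟩, hg0, hgs⟩ := hp
    rw [mem_tuples]
    dsimp only
    constructor
    · intro i
      refine Fin.lastCases ?_ ?_ i
      · rw [Fin.snoc_last]; exact hm0
      · intro j
        rw [Fin.snoc_castSucc]
        exact hg0 j
    · rw [Fin.sum_univ_castSucc]
      simp only [Fin.snoc_castSucc, Fin.snoc_last]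
      rw [hgs]
      exact tsub_add_cancel_of_le hm
  · intro f _
    exact Fin.snoc_init_self f
  · rintro ⟨m, g⟩ _
    simp [Fin.init_snoc, Fin.snoc_last]
  · intro f _
    rw [List.ofFn_succ']
    rw [List.prod_concat]
    rfl


lemma sum_sub_lt {n m : Fin r → ℕ} (hm : m ≤ n) (hm0 : m ≠ 0) :
    ∑ i, (n - m) i < ∑ i, n i := by
  have h1 : (n - m) + m = n := tsub_add_cancel_of_le hm
  have h2 : ∑ i, (n - m) i + ∑ i, m i = ∑ i, n i := by
    rw [← Finset.sum_add_distrib]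
    conv_rhs => rw [← h1]
    rfl
  have h3 := sum_pos_of_ne_zero hm0
  omega

lemma Lf_rec (n : Fin r → ℕ) (hn : n ≠ 0) :
    Lf R n = -∑ m ∈ (Finset.Iic n).filter (· ≠ 0), Lf R (n - m) * R m := by
  have hK := sum_pos_of_ne_zero hn
  set K := ∑ i, n i with hKdef
  have step1 : ∀ m ∈ (Finset.Iic n).filter (· ≠ 0),
      Lf R (n - m) * R m
        = ∑ k ∈ Finset.range K, (-1 : ℂ) ^ k • (Ak R k (n - m) * R m) := by
    intro m hm
    rw [Finset.mem_filter, Finset.mem_Iic] at hm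
    rw [Lf_eq R (n - m) K (lt_of_lt_of_le (sum_sub_lt hm.1 hm.2) le_rfl), Finset.sum_mul]
    exact Finset.sum_congr rfl fun k _ => smul_mul_assoc _ _ _
  rw [Finset.sum_congr rfl step1, Finset.sum_comm]
  have step2 : ∀ k ∈ Finset.range K,
      (∑ m ∈ (Finset.Iic n).filter (· ≠ 0), (-1 : ℂ) ^ k • (Ak R k (n - m) * R m))
        = (-1 : ℂ) ^ k • Ak R (k + 1) n := by
    intro k _
    rw [← Finset.smul_sum, ← Ak_succ]
  rw [Finset.sum_congr rfl step2, Lf, if_neg hn]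
  rw [← Finset.Ico_add_one_right_eq_Icc, Finset.sum_Ico_eq_sum_range]
  rw [← Finset.sum_neg_distrib]
  refine Finset.sum_congr rfl fun k hk => ?_
  have : (1 : ℕ) + k = k + 1 := by omega
  rw [this, pow_succ]
  simp [neg_smul]

end ABRRAux


/-- Limit at zero of the graded components of the ABRR recursion
(second half of the asymptotic lemma, `lim_{z→0} J_m^+(z^θ) = R_m^+`):
as `z → 0⁺`, `J_n(z)` converges to
`∑_{k=1}^{|n|} (−1)^k ∑_{m⁽¹⁾+⋯+m⁽ᵏ⁾=n, m⁽ⁱ⁾≠0} R(m⁽¹⁾)⋯R(m⁽ᵏ⁾)`. -/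
theorem abrr_graded_components_tendsto_at_zero
    (r N : ℕ) (hr : 1 ≤ r) (hN : 1 ≤ N)
    (θ : Fin r → ℕ) (hθ : ∀ i, 1 ≤ θ i)
    (R : (Fin r → ℕ) → Matrix (Fin N) (Fin N) ℂ) (hR0 : R 0 = 0)
    (c : (Fin r → ℕ) → ℂ)
    (J : (Fin r → ℕ) → ℝ → Matrix (Fin N) (Fin N) ℂ)
    (hJ : ∃ ε : ℝ, 0 < ε ∧ ∀ z : ℝ, 0 < z → z < ε →
      J 0 z = 1 ∧ ∀ n : Fin r → ℕ, n ≠ 0 →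
        (c n * (z : ℂ) ^ (∑ i, n i * θ i) - 1) • J n z =
          ∑ m ∈ (Finset.Iic n).filter (· ≠ 0), J (n - m) z * R m) :
    ∀ n : Fin r → ℕ, n ≠ 0 →
      Filter.Tendsto (J n) (nhdsWithin 0 (Set.Ioi 0))
        (nhds (∑ k ∈ Finset.Icc 1 (∑ i, n i), (-1 : ℂ) ^ k •
          ∑ f ∈ (Fintype.piFinset fun _ : Fin k => Finset.Iic n).filter
              (fun f => (∀ i, f i ≠ 0) ∧ ∑ i, f i = n),
            (List.ofFn fun i : Fin k => R (f i)).prod)) := by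
  obtain ⟨ε, hε, hJ⟩ := hJ
  set l := nhdsWithin (0 : ℝ) (Set.Ioi 0) with hl
  have hev : ∀ᶠ z in l, 0 < z ∧ z < ε := by
    have h1 : ∀ᶠ z : ℝ in l, 0 < z := eventually_mem_nhdsWithin
    have h2 : ∀ᶠ z : ℝ in l, z < ε :=
      mem_nhdsWithin_of_mem_nhds (Iio_mem_nhds hε)
    exact h1.and h2
  have main : ∀ K : ℕ, ∀ n : Fin r → ℕ, ∑ i, n i < K →
      Filter.Tendsto (J n) l (nhds (ABRRAux.Lf R n)) := by
    intro K
    induction K with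
    | zero => exact fun n hn => absurd hn (Nat.not_lt_zero _)
    | succ K ih =>
      intro n hn
      by_cases h0 : n = 0
      · subst h0
        rw [ABRRAux.Lf, if_pos rfl]
        refine Filter.Tendsto.congr' ?_ tendsto_const_nhds
        filter_upwards [hev] with z hz
        exact ((hJ z hz.1 hz.2).1).symm
      · have hd : (∑ i, n i * θ i) ≠ 0 := by
          intro h
          apply h0
          funext i
          have := Finset.sum_eq_zero_iff.mp h i (Finset.mem_univ i)
          have hti := hθ i
          have : n i = 0 := by
            rcases Nat.mul_eq_zero.mp this with h' | h'
            · exact h'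
            · omega
          simpa using this
        have hg : Filter.Tendsto (fun z : ℝ => c n * (z : ℂ) ^ (∑ i, n i * θ i) - 1)
            l (nhds (-1)) := by
          have hpow : Filter.Tendsto (fun z : ℝ => ((z : ℂ)) ^ (∑ i, n i * θ i))
              l (nhds 0) := by
            have h1 : Filter.Tendsto (fun z : ℝ => ((z : ℂ)) ^ (∑ i, n i * θ i))
                (nhds 0) (nhds (((0 : ℝ) : ℂ) ^ (∑ i, n i * θ i))) :=
              ((Complex.continuous_ofReal.tendsto 0).pow _)
            rw [Complex.ofReal_zero, zero_pow hd] at h1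
            exact h1.mono_left nhdsWithin_le_nhds
          have h2 : Filter.Tendsto (fun z : ℝ => c n * (z : ℂ) ^ (∑ i, n i * θ i) - 1)
              l (nhds (c n * 0 - 1)) :=
            (hpow.const_mul (c n)).sub tendsto_const_nhds
          simpa using h2
        have hgne : ∀ᶠ z : ℝ in l, (c n * (z : ℂ) ^ (∑ i, n i * θ i) - 1) ≠ 0 :=
          hg.eventually_ne (by norm_num)
        have hsum : Filter.Tendsto
            (fun z : ℝ => ∑ m ∈ (Finset.Iic n).filter (· ≠ 0), J (n - m) z * R m) l
            (nhds (∑ m ∈ (Finset.Iic n).filter (· ≠ 0), ABRRAux.Lf R (n - m) * R m)) := by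
          refine tendsto_finset_sum _ fun m hm => ?_
          rw [Finset.mem_filter, Finset.mem_Iic] at hm
          have hlt : ∑ i, (n - m) i < K := by
            have := ABRRAux.sum_sub_lt hm.1 hm.2
            omega
          exact (ih (n - m) hlt).mul tendsto_const_nhds
        have hfinal : Filter.Tendsto
            (fun z : ℝ => (c n * (z : ℂ) ^ (∑ i, n i * θ i) - 1)⁻¹ •
              ∑ m ∈ (Finset.Iic n).filter (· ≠ 0), J (n - m) z * R m) l
            (nhds ((-1 : ℂ)⁻¹ •
              ∑ m ∈ (Finset.Iic n).filter (· ≠ 0), ABRRAux.Lf R (n - m) * R m)) :=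
          (hg.inv₀ (by norm_num)).smul hsum
        have heq : (fun z : ℝ => (c n * (z : ℂ) ^ (∑ i, n i * θ i) - 1)⁻¹ •
              ∑ m ∈ (Finset.Iic n).filter (· ≠ 0), J (n - m) z * R m) =ᶠ[l] J n := by
          filter_upwards [hev, hgne] with z hz hne
          rw [← (hJ z hz.1 hz.2).2 n h0, inv_smul_smul₀ hne]
        have hT := hfinal.congr' heq
        have hval : ((-1 : ℂ)⁻¹ •
            ∑ m ∈ (Finset.Iic n).filter (· ≠ 0), ABRRAux.Lf R (n - m) * R m)
            = ABRRAux.Lf R n := by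
          rw [ABRRAux.Lf_rec R n h0, inv_neg_one, neg_one_smul]
        rwa [hval] at hT
  intro n hn
  have hT := main (∑ i, n i + 1) n (Nat.lt_succ_self _)
  rw [ABRRAux.Lf, if_neg hn] at hT
  simpa only [ABRRAux.Ak, ABRRAux.tuples] using hT
end

section
/- Existence and sign-dependence of the p → 0 limit of the shifted fusion operator J_m(z p^s): Let a : ℕ^r∖{0} → ℝ and suppose c_m ≠ 0 for every multi-index m ≠ 0. Suppose J : ℕ^r → ((0,1) → M_N(ℂ)) satisfies, for all sufficiently small real q > 0: J_0(q) = 1 and, for every multi-index n ≠ 0, (c_n q^{a_n} − 1)·J_n(q) = ∑_{0 ≠ m ≤ n} J_{n−m}(q)·R(m). Fix a multi-index n ≠ 0 and assume a_m ≠ 0 for every m with 0 ≠ m ≤ n. Then lim_{q→0⁺} J_n(q) exists and equals L_n, where L is defined recursively by L_0 = 1 and, for 0 ≠ m ≤ n: L_m = 0 if a_m < 0, and L_m = −∑_{0 ≠ m′ ≤ m} L_{m−m′}·R(m′) if a_m > 0. In particular the limit depends only on the signs of the exponents a_m for 0 ≠ m ≤ n. -/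
/-!
The recursion determines `J_n` from the `J_{n-m}` with `0 ≠ m ≤ n`, so one argues by well-founded
induction on `n`. Dividing the recursion by the scalar `c_n q^{a_n} - 1`, the right-hand side
converges by the induction hypothesis, while the inverse scalar tends to `-1` when `a_n > 0`
(`q^{a_n} → 0`) and to `0` when `a_n < 0` (`q^{a_n} → ∞`). This is exactly the recursion for `L`.
-/

open Filter Topology Bornology

theorem tsub_lt_self_of_ne_zero {ι : Type*} {m m' : ι → ℕ} (hle : m' ≤ m) (h0 : m' ≠ 0) :
    m - m' < m :=
  tsub_le_self.lt_of_ne fun h ↦ h0 <| by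
    rwa [tsub_eq_iff_eq_add_of_le hle, left_eq_add] at h

theorem tendsto_of_eventually_smul_eq {α G E : Type*} [GroupWithZero G] [TopologicalSpace G]
    [MulAction G E] [TopologicalSpace E] [ContinuousSMul G E] {l : Filter α} {z : α → G}
    {f g : α → E} {w : G} {y : E} (hz : Tendsto (fun x ↦ (z x)⁻¹) l (𝓝 w))
    (hz0 : ∀ᶠ x in l, z x ≠ 0) (hg : Tendsto g l (𝓝 y)) (hfg : ∀ᶠ x in l, z x • f x = g x) :
    Tendsto f l (𝓝 (w • y)) :=
  (hz.smul hg).congr' <| by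
    filter_upwards [hz0, hfg] with x hx hxfg
    rw [← hxfg, inv_smul_smul₀ hx]

section GradedRecursion

variable {α ι 𝕜 A : Type*} [Fintype ι] [DecidableEq ι] [DivisionRing 𝕜] [TopologicalSpace 𝕜]
  [Semiring A] [TopologicalSpace A] [IsTopologicalSemiring A] [Module 𝕜 A] [ContinuousSMul 𝕜 A]

theorem tendsto_of_graded_recursion {l : Filter α} {J : (ι → ℕ) → α → A}
    {R L : (ι → ℕ) → A} {z : (ι → ℕ) → α → 𝕜} {w : (ι → ℕ) → 𝕜} {n : ι → ℕ}
    (hJ0 : Tendsto (J 0) l (𝓝 (L 0)))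
    (hz : ∀ m, m ≠ 0 → m ≤ n → Tendsto (fun x ↦ (z m x)⁻¹) l (𝓝 (w m)))
    (hz0 : ∀ m, m ≠ 0 → m ≤ n → ∀ᶠ x in l, z m x ≠ 0)
    (hJ : ∀ m, m ≠ 0 → m ≤ n → ∀ᶠ x in l,
      z m x • J m x = ∑ m' ∈ (Finset.Iic m).filter (· ≠ 0), J (m - m') x * R m')
    (hL : ∀ m, m ≠ 0 → m ≤ n →
      L m = w m • ∑ m' ∈ (Finset.Iic m).filter (· ≠ 0), L (m - m') * R m') :
    Tendsto (J n) l (𝓝 (L n)) := by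
  suffices ∀ m ≤ n, Tendsto (J m) l (𝓝 (L m)) from this n le_rfl
  intro m
  induction m using WellFoundedLT.induction with
  | _ m ih =>
    intro hmn
    rcases eq_or_ne m 0 with rfl | hm
    · exact hJ0
    rw [hL m hm hmn]
    refine tendsto_of_eventually_smul_eq (hz m hm hmn) (hz0 m hm hmn) ?_ (hJ m hm hmn)
    refine tendsto_finsetSum _ fun m' hm' ↦ ?_
    obtain ⟨hm'm, hm'0⟩ := Finset.mem_filter.mp hm'
    exact (ih _ (tsub_lt_self_of_ne_zero (Finset.mem_Iic.mp hm'm) hm'0)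
      (tsub_le_self.trans hmn)).mul tendsto_const_nhds

end GradedRecursion

section RpowScalar

variable {𝕜 : Type*} [RCLike 𝕜] {c : 𝕜} {a : ℝ}

theorem tendsto_const_mul_rpow_sub_one_of_pos (c : 𝕜) (ha : 0 < a) :
    Tendsto (fun q : ℝ ↦ c * ((q ^ a : ℝ) : 𝕜) - 1) (𝓝[>] 0) (𝓝 (-1)) := by
  have : Tendsto (fun q : ℝ ↦ q ^ a) (𝓝[>] 0) (𝓝 0) := by
    simpa [Real.zero_rpow ha.ne'] using
      (Real.continuousAt_rpow_const 0 a (.inr ha.le)).tendsto.mono_left nhdsWithin_le_nhds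
  simpa using ((RCLike.continuous_ofReal.tendsto 0).comp this).const_mul c |>.sub_const 1

theorem tendsto_const_mul_rpow_sub_one_of_neg (hc : c ≠ 0) (ha : a < 0) :
    Tendsto (fun q : ℝ ↦ c * ((q ^ a : ℝ) : 𝕜) - 1) (𝓝[>] 0) (cobounded 𝕜) :=
  (tendsto_sub_const_cobounded 1).comp <| (tendsto_mul_left_cobounded hc).comp <|
    (RCLike.tendsto_ofReal_atTop_cobounded 𝕜).comp (tendsto_rpow_neg_nhdsGT_zero ha)

theorem tendsto_inv_const_mul_rpow_sub_one (hc : c ≠ 0) (ha : a ≠ 0) :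
    Tendsto (fun q : ℝ ↦ (c * ((q ^ a : ℝ) : 𝕜) - 1)⁻¹) (𝓝[>] 0)
      (𝓝 (if 0 < a then -1 else 0)) := by
  rcases ha.lt_or_gt with hneg | hpos
  · rw [if_neg hneg.not_gt]
    exact tendsto_inv₀_cobounded.comp (tendsto_const_mul_rpow_sub_one_of_neg hc hneg)
  · rw [if_pos hpos, ← inv_neg_one]
    exact (tendsto_const_mul_rpow_sub_one_of_pos c hpos).inv₀ (neg_ne_zero.mpr one_ne_zero)

theorem eventually_const_mul_rpow_sub_one_ne_zero (hc : c ≠ 0) (ha : a ≠ 0) :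
    ∀ᶠ q : ℝ in 𝓝[>] 0, c * ((q ^ a : ℝ) : 𝕜) - 1 ≠ 0 := by
  rcases ha.lt_or_gt with hneg | hpos
  · exact (tendsto_const_mul_rpow_sub_one_of_neg hc hneg).eventually (eventually_ne_cobounded 0)
  · exact (tendsto_const_mul_rpow_sub_one_of_pos c hpos).eventually_ne (neg_ne_zero.mpr one_ne_zero)

end RpowScalar

theorem shifted_fusion_operator_limit_exists_general
    (r N : ℕ)
    (R : (Fin r → ℕ) → Matrix (Fin N) (Fin N) ℂ)
    (c : (Fin r → ℕ) → ℂ) (hc : ∀ m : Fin r → ℕ, m ≠ 0 → c m ≠ 0)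
    (a : (Fin r → ℕ) → ℝ)
    (J : (Fin r → ℕ) → ℝ → Matrix (Fin N) (Fin N) ℂ)
    (hJ : ∃ ε : ℝ, 0 < ε ∧ ∀ q : ℝ, 0 < q → q < ε →
      J 0 q = 1 ∧ ∀ n : Fin r → ℕ, n ≠ 0 →
        (c n * ((q ^ a n : ℝ) : ℂ) - 1) • J n q =
          ∑ m ∈ (Finset.Iic n).filter (· ≠ 0), J (n - m) q * R m)
    (n : Fin r → ℕ)
    (ha : ∀ m : Fin r → ℕ, m ≠ 0 → m ≤ n → a m ≠ 0)
    (L : (Fin r → ℕ) → Matrix (Fin N) (Fin N) ℂ)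
    (hL0 : L 0 = 1)
    (hLneg : ∀ m : Fin r → ℕ, m ≠ 0 → m ≤ n → a m < 0 → L m = 0)
    (hLpos : ∀ m : Fin r → ℕ, m ≠ 0 → m ≤ n → 0 < a m →
      L m = -∑ m' ∈ (Finset.Iic m).filter (· ≠ 0), L (m - m') * R m') :
    Filter.Tendsto (J n) (nhdsWithin 0 (Set.Ioi 0)) (nhds (L n)) := by
  obtain ⟨ε, hε, hJε⟩ := hJ
  have hJ' : ∀ᶠ q in 𝓝[>] (0 : ℝ), _ := eventually_of_mem (Ioo_mem_nhdsGT hε) fun q hq ↦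
    hJε q hq.1 hq.2
  refine tendsto_of_graded_recursion (R := R) (z := fun m q ↦ c m * ((q ^ a m : ℝ) : ℂ) - 1)
    (w := fun m ↦ if 0 < a m then -1 else 0) ?_
    (fun m hm hmn ↦ tendsto_inv_const_mul_rpow_sub_one (hc m hm) (ha m hm hmn))
    (fun m hm hmn ↦ eventually_const_mul_rpow_sub_one_ne_zero (hc m hm) (ha m hm hmn))
    (fun m hm _ ↦ hJ'.mono fun q hq ↦ hq.2 m hm) fun m hm hmn ↦ ?_
  · rw [hL0]
    exact tendsto_const_nhds.congr' (hJ'.mono fun q hq ↦ hq.1.symm)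
  · split_ifs with hpos
    · rw [hLpos m hm hmn hpos, neg_one_smul]
    · rw [hLneg m hm hmn ((ha m hm hmn).lt_of_le (not_lt.mp hpos)), zero_smul]

/-- Existence and sign-dependence of the `p → 0` limit of the shifted fusion
operator `J_m(z p^s)`: the limit of `J_n(q)` as `q → 0⁺` exists and equals the
value `L n` of the recursively defined family `L` (so the limit depends only on
the signs of the exponents `a m` for `0 ≠ m ≤ n`). -/
theorem shifted_fusion_operator_limit_exists
    (r N : ℕ) (hr : 1 ≤ r) (hN : 1 ≤ N)
    (R : (Fin r → ℕ) → Matrix (Fin N) (Fin N) ℂ) (hR0 : R 0 = 0)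
    (c : (Fin r → ℕ) → ℂ) (hc : ∀ m : Fin r → ℕ, m ≠ 0 → c m ≠ 0)
    (a : (Fin r → ℕ) → ℝ)
    (J : (Fin r → ℕ) → ℝ → Matrix (Fin N) (Fin N) ℂ)
    (hJ : ∃ ε : ℝ, 0 < ε ∧ ∀ q : ℝ, 0 < q → q < ε →
      J 0 q = 1 ∧ ∀ n : Fin r → ℕ, n ≠ 0 →
        (c n * ((q ^ a n : ℝ) : ℂ) - 1) • J n q =
          ∑ m ∈ (Finset.Iic n).filter (· ≠ 0), J (n - m) q * R m)
    (n : Fin r → ℕ) (hn : n ≠ 0)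
    (ha : ∀ m : Fin r → ℕ, m ≠ 0 → m ≤ n → a m ≠ 0)
    (L : (Fin r → ℕ) → Matrix (Fin N) (Fin N) ℂ)
    (hL0 : L 0 = 1)
    (hLneg : ∀ m : Fin r → ℕ, m ≠ 0 → m ≤ n → a m < 0 → L m = 0)
    (hLpos : ∀ m : Fin r → ℕ, m ≠ 0 → m ≤ n → 0 < a m →
      L m = -∑ m' ∈ (Finset.Iic m).filter (· ≠ 0), L (m - m') * R m') :
    Filter.Tendsto (J n) (nhdsWithin 0 (Set.Ioi 0)) (nhds (L n)) :=
  shifted_fusion_operator_limit_exists_general r N R c hc a J hJ n ha L hL0 hLneg hLpos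
end

section
/- Local constancy in s of the p → 0 limit of J_m(z p^s) (the limit jumps only across the hyperplanes n·s + k = 0): Suppose c_m ≠ 0 for every multi-index m ≠ 0, fix real constants k_m for m ≠ 0, and for s ∈ ℝ^r set a_m(s) := ∑_{i=1}^r m_i s_i + k_m. Fix a multi-index n ≠ 0 and let U_n := {s ∈ ℝ^r : a_m(s) ≠ 0 for all m with 0 ≠ m ≤ n}. For each s ∈ U_n suppose J^{(s)} : ℕ^r → ((0,1) → M_N(ℂ)) satisfies, for all sufficiently small q > 0: J^{(s)}_0(q) = 1 and, for every 0 ≠ m ≤ n, (c_m q^{a_m(s)} − 1)·J^{(s)}_m(q) = ∑_{0 ≠ m′ ≤ m} J^{(s)}_{m−m′}(q)·R(m′). Then for every s ∈ U_n the limit L_n(s) := lim_{q→0⁺} J^{(s)}_n(q) exists, and the function s ↦ L_n(s) is locally constant on U_n; i.e., it can change only when s crosses one of the finitely many affine hyperplanes {s ∈ ℝ^r : ∑_i m_i s_i + k_m = 0} with 0 ≠ m ≤ n. -/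
/-!
Dividing the recursion by `c_m q^{a_m} - 1` expresses `J_m(q)` through the `J_{m-m'}(q)`,
`0 ≠ m' ≤ m`, with weight `(c_m q^{a_m} - 1)⁻¹`; as `q → 0⁺` this weight tends to `0` if
`a_m < 0` and to `-1` if `a_m > 0`. By well-founded induction on `m`, `J_m(q)` therefore
converges to the solution of the same recursion with the weights replaced by these limits.
That solution depends on `s` only through the signs of the `a_m(s)`, `0 ≠ m ≤ n`, which are
locally constant on `U_n`.
-/

open Filter Topology

namespace ShiftedFusion

section Recursion

variable {ι : Type*}

theorem tsub_lt_self_of_ne_zero {m m' : ι → ℕ} (h : m' ≤ m) (h0 : m' ≠ 0) : m - m' < m := by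
  refine tsub_le_self.lt_of_ne fun heq => h0 (funext fun i => ?_)
  have hi := congrFun heq i
  have hle := h i
  simp only [Pi.sub_apply, Pi.zero_apply] at hi hle ⊢
  omega

variable [Fintype ι] [DecidableEq ι] {A : Type*} [Semiring A] [Module ℂ A]

noncomputable def recursionSolution (R : (ι → ℕ) → A) (b : (ι → ℕ) → ℂ) (m : ι → ℕ) : A :=
  if m = 0 then 1 else
    b m • ∑ m' ∈ ((Finset.Iic m).filter (· ≠ 0)).attach,
      recursionSolution R b (m - m'.1) * R m'.1
termination_by ∑ i, m i
decreasing_by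
  have hm' := m'.2
  rw [Finset.mem_filter, Finset.mem_Iic] at hm'
  exact Fintype.sum_strictMono (tsub_lt_self_of_ne_zero hm'.1 hm'.2)

variable (R : (ι → ℕ) → A)

theorem recursionSolution_zero (b : (ι → ℕ) → ℂ) : recursionSolution R b 0 = 1 := by
  rw [recursionSolution, if_pos rfl]

theorem recursionSolution_of_ne_zero (b : (ι → ℕ) → ℂ) {m : ι → ℕ} (hm : m ≠ 0) :
    recursionSolution R b m =
      b m • ∑ m' ∈ (Finset.Iic m).filter (· ≠ 0), recursionSolution R b (m - m') * R m' := by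
  rw [recursionSolution, if_neg hm,
    Finset.sum_attach _ fun m' => recursionSolution R b (m - m') * R m']

theorem recursionSolution_congr {b b' : (ι → ℕ) → ℂ} {n : ι → ℕ}
    (h : ∀ m, m ≠ 0 → m ≤ n → b m = b' m) :
    recursionSolution R b n = recursionSolution R b' n := by
  suffices ∀ m ≤ n, recursionSolution R b m = recursionSolution R b' m from this n le_rfl
  intro m
  induction m using WellFoundedLT.induction with
  | _ m ih =>
    intro hmn
    by_cases hm : m = 0
    · rw [hm, recursionSolution_zero, recursionSolution_zero]
    rw [recursionSolution_of_ne_zero R b hm, recursionSolution_of_ne_zero R b' hm, h m hm hmn]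
    refine congrArg _ (Finset.sum_congr rfl fun m' hm' => ?_)
    rw [Finset.mem_filter, Finset.mem_Iic] at hm'
    rw [ih _ (tsub_lt_self_of_ne_zero hm'.1 hm'.2) (tsub_le_self.trans hmn)]

theorem tendsto_recursionSolution [TopologicalSpace A] [ContinuousAdd A] [ContinuousMul A]
    [ContinuousSMul ℂ A] {X : Type*} {l : Filter X} {n : ι → ℕ}
    (J : (ι → ℕ) → X → A) (g : (ι → ℕ) → X → ℂ) (b : (ι → ℕ) → ℂ)
    (h0 : ∀ᶠ q in l, J 0 q = 1)
    (hrec : ∀ m, m ≠ 0 → m ≤ n → ∀ᶠ q in l,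
      J m q = g m q • ∑ m' ∈ (Finset.Iic m).filter (· ≠ 0), J (m - m') q * R m')
    (hg : ∀ m, m ≠ 0 → m ≤ n → Tendsto (g m) l (𝓝 (b m))) :
    Tendsto (J n) l (𝓝 (recursionSolution R b n)) := by
  suffices ∀ m ≤ n, Tendsto (J m) l (𝓝 (recursionSolution R b m)) from this n le_rfl
  intro m
  induction m using WellFoundedLT.induction with
  | _ m ih =>
    intro hmn
    by_cases hm : m = 0
    · rw [hm, recursionSolution_zero]
      exact tendsto_const_nhds.congr' (h0.mono fun _ => Eq.symm)
    rw [recursionSolution_of_ne_zero R b hm]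
    refine ((hg m hm hmn).smul (tendsto_finsetSum _ fun m' hm' => ?_)).congr'
      ((hrec m hm hmn).mono fun _ => Eq.symm)
    rw [Finset.mem_filter, Finset.mem_Iic] at hm'
    exact (ih _ (tsub_lt_self_of_ne_zero hm'.1 hm'.2) (tsub_le_self.trans hmn)).mul_const _

end Recursion

section Weight

/-- The limit of `(c q^a - 1)⁻¹` as `q → 0⁺`, for `c ≠ 0` and `a ≠ 0`. -/
noncomputable def weightLimit (a : ℝ) : ℂ := if a < 0 then 0 else -1

theorem eventually_weightLimit_eq {X : Type*} [TopologicalSpace X] {f : X → ℝ} {x : X}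
    (hf : ContinuousAt f x) (hx : f x ≠ 0) :
    ∀ᶠ y in 𝓝 x, weightLimit (f y) = weightLimit (f x) := by
  rcases hx.lt_or_gt with hneg | hpos
  · filter_upwards [hf.eventually_lt continuousAt_const hneg] with y hy
    simp only [weightLimit, if_pos hy, if_pos hneg]
  · filter_upwards [continuousAt_const.eventually_lt hf hpos] with y hy
    simp only [weightLimit, if_neg hy.not_gt, if_neg hpos.not_gt]

theorem tendsto_ofReal_rpow_nhdsGT_zero {b : ℝ} (hb : 0 < b) :
    Tendsto (fun q : ℝ => ((q ^ b : ℝ) : ℂ)) (𝓝[>] 0) (𝓝 0) := by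
  have h : ContinuousAt (fun q : ℝ => ((q ^ b : ℝ) : ℂ)) 0 :=
    Complex.continuous_ofReal.continuousAt.comp (Real.continuousAt_rpow_const 0 b (Or.inr hb.le))
  simpa [Real.zero_rpow hb.ne'] using h.tendsto.mono_left (nhdsWithin_le_nhds (s := Set.Ioi 0))

-- For `a < 0` the factor `c q^a - 1` blows up; dividing by `q^a` turns it into `c - q^{-a} → c`.
theorem eventually_mul_rpow_sub_one_eq {c : ℂ} {a : ℝ} :
    ∀ᶠ q in 𝓝[>] (0 : ℝ), c * ((q ^ a : ℝ) : ℂ) - 1 =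
      (c - ((q ^ (-a) : ℝ) : ℂ)) * (((q ^ (-a) : ℝ) : ℂ))⁻¹ := by
  filter_upwards [self_mem_nhdsWithin] with q hq
  have hqa : ((q ^ a : ℝ) : ℂ) ≠ 0 := Complex.ofReal_ne_zero.2 (Real.rpow_pos_of_pos hq a).ne'
  rw [Real.rpow_neg (le_of_lt hq), Complex.ofReal_inv, inv_inv]
  field_simp

theorem tendsto_const_sub_ofReal_rpow_neg {c : ℂ} {a : ℝ} (ha : a < 0) :
    Tendsto (fun q : ℝ => c - ((q ^ (-a) : ℝ) : ℂ)) (𝓝[>] 0) (𝓝 c) := by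
  simpa using tendsto_const_nhds.sub (tendsto_ofReal_rpow_nhdsGT_zero (neg_pos.2 ha))

theorem tendsto_mul_ofReal_rpow_sub_one {c : ℂ} {a : ℝ} (ha : 0 < a) :
    Tendsto (fun q : ℝ => c * ((q ^ a : ℝ) : ℂ) - 1) (𝓝[>] 0) (𝓝 (-1)) := by
  simpa using ((tendsto_ofReal_rpow_nhdsGT_zero ha).const_mul c).sub_const 1

theorem tendsto_inv_mul_rpow_sub_one {c : ℂ} (hc : c ≠ 0) {a : ℝ} (ha : a ≠ 0) :
    Tendsto (fun q : ℝ => (c * ((q ^ a : ℝ) : ℂ) - 1)⁻¹) (𝓝[>] 0) (𝓝 (weightLimit a)) := by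
  rcases ha.lt_or_gt with hneg | hpos
  · have hu := tendsto_ofReal_rpow_nhdsGT_zero (neg_pos.2 hneg)
    rw [weightLimit, if_pos hneg, ← zero_mul c⁻¹]
    refine (hu.mul ((tendsto_const_sub_ofReal_rpow_neg hneg).inv₀ hc)).congr' ?_
    filter_upwards [eventually_mul_rpow_sub_one_eq] with q hq
    rw [hq, mul_inv, inv_inv, mul_comm]
  · rw [weightLimit, if_neg hpos.not_gt, ← inv_neg_one]
    exact (tendsto_mul_ofReal_rpow_sub_one hpos).inv₀ (by norm_num)

theorem eventually_mul_rpow_sub_one_ne_zero {c : ℂ} (hc : c ≠ 0) {a : ℝ} (ha : a ≠ 0) :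
    ∀ᶠ q in 𝓝[>] (0 : ℝ), c * ((q ^ a : ℝ) : ℂ) - 1 ≠ 0 := by
  rcases ha.lt_or_gt with hneg | hpos
  · filter_upwards [eventually_mul_rpow_sub_one_eq,
      (tendsto_const_sub_ofReal_rpow_neg hneg).eventually_ne hc, self_mem_nhdsWithin]
      with q hq hne hq0
    rw [hq]
    exact mul_ne_zero hne <| inv_ne_zero <|
      Complex.ofReal_ne_zero.2 (Real.rpow_pos_of_pos hq0 _).ne'
  · exact (tendsto_mul_ofReal_rpow_sub_one hpos).eventually_ne (by norm_num)

end Weight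

end ShiftedFusion

open ShiftedFusion in
theorem shifted_fusion_operator_limit_locally_constant_general
    (r N : ℕ)
    (R : (Fin r → ℕ) → Matrix (Fin N) (Fin N) ℂ)
    (c : (Fin r → ℕ) → ℂ) (hc : ∀ m : Fin r → ℕ, m ≠ 0 → c m ≠ 0)
    (k : (Fin r → ℕ) → ℝ)
    (n : Fin r → ℕ)
    (U : Set (Fin r → ℝ))
    (hU : U = {s : Fin r → ℝ | ∀ m : Fin r → ℕ, m ≠ 0 → m ≤ n →
      (∑ i, (m i : ℝ) * s i) + k m ≠ 0})
    (J : (Fin r → ℝ) → (Fin r → ℕ) → ℝ → Matrix (Fin N) (Fin N) ℂ)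
    (hJ : ∀ s ∈ U, ∃ ε : ℝ, 0 < ε ∧ ∀ q : ℝ, 0 < q → q < ε →
      J s 0 q = 1 ∧ ∀ m : Fin r → ℕ, m ≠ 0 → m ≤ n →
        (c m * ((q ^ ((∑ i, (m i : ℝ) * s i) + k m) : ℝ) : ℂ) - 1) • J s m q =
          ∑ m' ∈ (Finset.Iic m).filter (· ≠ 0), J s (m - m') q * R m') :
    ∃ L : (Fin r → ℝ) → Matrix (Fin N) (Fin N) ℂ,
      (∀ s ∈ U, Filter.Tendsto (J s n) (nhdsWithin 0 (Set.Ioi 0)) (nhds (L s))) ∧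
      (∀ s ∈ U, ∀ᶠ s' in nhds s, s' ∈ U → L s' = L s) := by
  subst hU
  refine ⟨fun s => recursionSolution R (fun m => weightLimit ((∑ i, (m i : ℝ) * s i) + k m)) n,
    fun s hs => ?_, fun s hs => ?_⟩
  · obtain ⟨ε, hε, hJs⟩ := hJ s hs
    have hsmall : ∀ᶠ q in 𝓝[>] (0 : ℝ), q ∈ Set.Ioo 0 ε := Ioo_mem_nhdsGT hε
    refine tendsto_recursionSolution R (J s)
      (fun m q => (c m * ((q ^ ((∑ i, (m i : ℝ) * s i) + k m) : ℝ) : ℂ) - 1)⁻¹) _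
      (hsmall.mono fun q hq => (hJs q hq.1 hq.2).1) (fun m hm hmn => ?_)
      (fun m hm hmn => tendsto_inv_mul_rpow_sub_one (hc m hm) (hs m hm hmn))
    filter_upwards [hsmall, eventually_mul_rpow_sub_one_ne_zero (hc m hm) (hs m hm hmn)]
      with q hq hne
    exact (eq_inv_smul_iff₀ hne).2 ((hJs q hq.1 hq.2).2 m hm hmn)
  · have hsigns : ∀ᶠ s' in 𝓝 s, ∀ m ∈ (Finset.Iic n).filter (· ≠ 0),
        weightLimit ((∑ i, (m i : ℝ) * s' i) + k m) =
          weightLimit ((∑ i, (m i : ℝ) * s i) + k m) := by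
      refine (eventually_all_finset _).2 fun m hm => ?_
      rw [Finset.mem_filter, Finset.mem_Iic] at hm
      have hcont : Continuous fun s' : Fin r → ℝ => (∑ i, (m i : ℝ) * s' i) + k m :=
        (continuous_finsetSum _ fun i _ => continuous_const.mul (continuous_apply i)).add
          continuous_const
      exact eventually_weightLimit_eq hcont.continuousAt (hs m hm.2 hm.1)
    filter_upwards [hsigns] with s' hs' _
    exact recursionSolution_congr R fun m hm hmn => hs' m (by simp [hm, hmn])

/-- Local constancy in `s` of the `p → 0` limit of `J_m(z p^s)`: on the open
set `U_n` where all exponents `a_m(s) = ∑ᵢ mᵢ sᵢ + k_m` (for `0 ≠ m ≤ n`) are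
nonzero, the limit `L_n(s) = lim_{q→0⁺} J^{(s)}_n(q)` exists and is a locally
constant function of `s`; it jumps only across the hyperplanes
`∑ᵢ mᵢ sᵢ + k_m = 0`. -/
theorem shifted_fusion_operator_limit_locally_constant
    (r N : ℕ) (hr : 1 ≤ r) (hN : 1 ≤ N)
    (R : (Fin r → ℕ) → Matrix (Fin N) (Fin N) ℂ) (hR0 : R 0 = 0)
    (c : (Fin r → ℕ) → ℂ) (hc : ∀ m : Fin r → ℕ, m ≠ 0 → c m ≠ 0)
    (k : (Fin r → ℕ) → ℝ)
    (n : Fin r → ℕ) (hn : n ≠ 0)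
    (U : Set (Fin r → ℝ))
    (hU : U = {s : Fin r → ℝ | ∀ m : Fin r → ℕ, m ≠ 0 → m ≤ n →
      (∑ i, (m i : ℝ) * s i) + k m ≠ 0})
    (J : (Fin r → ℝ) → (Fin r → ℕ) → ℝ → Matrix (Fin N) (Fin N) ℂ)
    (hJ : ∀ s ∈ U, ∃ ε : ℝ, 0 < ε ∧ ∀ q : ℝ, 0 < q → q < ε →
      J s 0 q = 1 ∧ ∀ m : Fin r → ℕ, m ≠ 0 → m ≤ n →
        (c m * ((q ^ ((∑ i, (m i : ℝ) * s i) + k m) : ℝ) : ℂ) - 1) • J s m q =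
          ∑ m' ∈ (Finset.Iic m).filter (· ≠ 0), J s (m - m') q * R m') :
    ∃ L : (Fin r → ℝ) → Matrix (Fin N) (Fin N) ℂ,
      (∀ s ∈ U, Filter.Tendsto (J s n) (nhdsWithin 0 (Set.Ioi 0)) (nhds (L s))) ∧
      (∀ s ∈ U, ∀ᶠ s' in nhds s, s' ∈ U → L s' = L s) :=
  shifted_fusion_operator_limit_locally_constant_general r N R c hc k n U hU J hJ
end
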